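/- Let G be a graph, ≺ a total order on its vertices, and α, β positive integers. If χ(G) > (2β+2)·α, then G has an induced subgraph H such that χ(H) > α and for every edge uv of H, the subgraph of G induced on the vertices strictly between u and v in the order ≺ has chromatic number greater than β. -/

import Mathlib

/-!
Cut the ordered vertex set greedily into consecutive blocks: each block is grown until adding the
next vertex would make it not `(β + 1)`-colorable. Every block is then `(β + 1)`-colorable, and
every block but the last is not `β`-colorable, since one more vertex costs at most one more colour.
Colour a vertex by the parity of its block together with its colour in a `(β + 1)`-colouring of
its block. Two adjacent vertices of the same colour lie in distinct blocks of equal parity, so a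
whole block lies strictly between them. There are `2β + 2` colours, so if every colour class were
`α`-colorable then `G` would be `(2β + 2) α`-colorable; hence some class has `χ > α`.
-/

theorem MonotoneOn.update_insert {α β : Type*} [LinearOrder α] [Preorder β] {f : α → β}
    {s : Set α} (hf : MonotoneOn f s) {a : α} (ha : ∀ x ∈ s, x < a) {k : β}
    (hk : ∀ x ∈ s, f x ≤ k) : MonotoneOn (Function.update f a k) (insert a s) := by
  rintro x (rfl | hx) y (rfl | hy) hxy
  · exact le_rfl
  · exact absurd hxy (ha y hy).not_ge
  · simpa [(ha x hx).ne] using hk x hx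
  · simpa [(ha x hx).ne, (ha y hy).ne] using hf hx hy hxy

theorem Finset.update_le_of_sup_le {α β : Type*} [DecidableEq α] [SemilatticeSup β] [OrderBot β]
    {s : Finset α} {f : α → β} {a : α} {k : β} (hk : s.sup f ≤ k) :
    ∀ v ∈ insert a s, Function.update f a k v ≤ k := by
  intro v hv
  by_cases hva : v = a
  · simp [hva]
  · simpa [hva] using (Finset.le_sup ((Finset.mem_insert.1 hv).resolve_left hva)).trans hk

theorem Set.insert_inter_preimage_update_self {α β : Type*} [DecidableEq α] {s : Set α}
    (a : α) (b : α → β) (k : β) :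
    insert a s ∩ Function.update b a k ⁻¹' {k} = insert a (s ∩ b ⁻¹' {k}) := by
  ext x
  by_cases hx : x = a <;> simp [hx]

theorem Set.insert_inter_preimage_update_of_ne {α β : Type*} [DecidableEq α] {s : Set α}
    {a : α} (ha : a ∉ s) (b : α → β) {k j : β} (hjk : j ≠ k) :
    insert a s ∩ Function.update b a k ⁻¹' {j} = s ∩ b ⁻¹' {j} := by
  ext x
  by_cases hx : x = a
  · subst hx
    simp [ha, hjk.symm]
  · simp [hx]

namespace SimpleGraph

variable {V : Type*} (G : SimpleGraph V)

theorem Colorable.induce_of_subset {s t : Set V} (hst : s ⊆ t) {n : ℕ}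
    (h : (G.induce t).Colorable n) : (G.induce s).Colorable n :=
  h.of_hom (G.induceHomOfLE hst).toHom

theorem Colorable.induce_insert {s : Set V} (a : V) {n : ℕ}
    (h : (G.induce s).Colorable n) : (G.induce (insert a s)).Colorable (n + 1) := by
  classical
  obtain ⟨C⟩ := h
  let D : (G.induce (insert a s)).Coloring (Option (Fin n)) :=
    Coloring.mk (fun x => if hx : (x : V) = a then none else some (C ⟨x, x.2.resolve_left hx⟩))
      fun {x y} hxy => by
        have hadj : G.Adj x y := by simpa using hxy
        by_cases hx : (x : V) = a <;> by_cases hy : (y : V) = a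
        · exact absurd (hx.trans hy.symm) hadj.ne
        all_goals simp only [hx, hy, dite_true, dite_false, ne_eq, reduceCtorEq, not_false_eq_true,
          Option.some.injEq]
        exact C.valid (by simpa using hadj)
  simpa using D.colorable

theorem exists_fiberwise_coloring {ι : Type*} (c : V → ι) {n : ℕ}
    (h : ∀ i, (G.induce (c ⁻¹' {i})).Colorable n) :
    ∃ C : V → Fin n, ∀ u v, G.Adj u v → c u = c v → C u ≠ C v := by
  let C : V → Fin n := fun v => (h (c v)).some ⟨v, rfl⟩
  have transport : ∀ {i x} (hx : c x = i), (h i).some ⟨x, hx⟩ = C x := by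
    rintro _ _ rfl; rfl
  exact ⟨C, fun u v huv hc heq =>
    (h (c v)).some.valid (by simpa using huv) ((transport hc).trans heq)⟩

theorem colorable_mul_of_forall_colorable_induce_fiber {ι : Type*} [Fintype ι] (c : V → ι)
    {n : ℕ} (h : ∀ i, (G.induce (c ⁻¹' {i})).Colorable n) :
    G.Colorable (Fintype.card ι * n) := by
  obtain ⟨C, hC⟩ := G.exists_fiberwise_coloring c h
  let D : G.Coloring (ι × Fin n) := Coloring.mk (fun v => (c v, C v)) fun {u v} huv heq =>
    hC u v huv (congrArg Prod.fst heq) (congrArg Prod.snd heq)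
  simpa using D.colorable

variable [LinearOrder V]

/-- `b v` is the index of the block containing `v`; the blocks `s ∩ b ⁻¹' {j}` are consecutive
intervals of `s`. -/
structure IsBlockPartition (β : ℕ) (s : Finset V) (b : V → ℕ) : Prop where
  monotoneOn : MonotoneOn b s
  colorable : ∀ j, (G.induce (↑s ∩ b ⁻¹' {j})).Colorable (β + 1)
  not_colorable : ∀ v ∈ s, ∀ j < b v, ¬ (G.induce (↑s ∩ b ⁻¹' {j})).Colorable β

section

variable {G} {β : ℕ} {s : Finset V} {b : V → ℕ}

theorem IsBlockPartition.not_colorable_of_lt_sup (hb : G.IsBlockPartition β s b) {j : ℕ}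
    (hj : j < s.sup b) : ¬ (G.induce (↑s ∩ b ⁻¹' {j})).Colorable β :=
  let ⟨v, hv, hjv⟩ := Finset.lt_sup_iff.1 hj
  hb.not_colorable v hv j hjv

theorem IsBlockPartition.insert_of_colorable (hb : G.IsBlockPartition β s b) {a : V}
    (ha : ∀ x ∈ s, x < a)
    (hlast : (G.induce (insert a (↑s ∩ b ⁻¹' {s.sup b}))).Colorable (β + 1)) :
    G.IsBlockPartition β (insert a s) (Function.update b a (s.sup b)) := by
  have has : a ∉ (s : Set V) := fun h => (ha a h).false
  refine ⟨?_, fun j => ?_, fun v hv j hj => ?_⟩ <;> rw [Finset.coe_insert]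
  · exact hb.monotoneOn.update_insert ha fun x hx => Finset.le_sup hx
  · rcases eq_or_ne j (s.sup b) with rfl | hjm
    · rwa [Set.insert_inter_preimage_update_self]
    · rw [Set.insert_inter_preimage_update_of_ne has b hjm]
      exact hb.colorable j
  · have hjm : j < s.sup b := hj.trans_le (Finset.update_le_of_sup_le le_rfl v hv)
    rw [Set.insert_inter_preimage_update_of_ne has b hjm.ne]
    exact hb.not_colorable_of_lt_sup hjm

theorem IsBlockPartition.insert_of_not_colorable (hb : G.IsBlockPartition β s b) {a : V}
    (ha : ∀ x ∈ s, x < a)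
    (hlast : ¬ (G.induce (insert a (↑s ∩ b ⁻¹' {s.sup b}))).Colorable (β + 1)) :
    G.IsBlockPartition β (insert a s) (Function.update b a (s.sup b + 1)) := by
  have has : a ∉ (s : Set V) := fun h => (ha a h).false
  refine ⟨?_, fun j => ?_, fun v hv j hj => ?_⟩ <;> rw [Finset.coe_insert]
  · exact hb.monotoneOn.update_insert ha fun x hx => (Finset.le_sup hx).trans (Nat.le_succ _)
  · rcases eq_or_ne j (s.sup b + 1) with rfl | hjm
    · have hempty : ↑s ∩ b ⁻¹' {s.sup b + 1} = ∅ :=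
        Set.eq_empty_of_forall_notMem fun x ⟨hx, hbx⟩ =>
          (Finset.le_sup hx).not_gt (Nat.lt_of_succ_le (le_of_eq hbx.symm))
      rw [Set.insert_inter_preimage_update_self, hempty]
      exact Colorable.induce_insert G a (Colorable.of_isEmpty _)
    · rw [Set.insert_inter_preimage_update_of_ne has b hjm]
      exact hb.colorable j
  · have hjm : j ≤ s.sup b := Nat.lt_succ_iff.1
      (hj.trans_le (Finset.update_le_of_sup_le (Nat.le_succ _) v hv))
    rw [Set.insert_inter_preimage_update_of_ne has b (by omega)]
    rcases hjm.lt_or_eq with hjm | rfl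
    · exact hb.not_colorable_of_lt_sup hjm
    · exact fun h => hlast (h.induce_insert G a)

theorem IsBlockPartition.exists_coloring [Fintype V]
    (hb : G.IsBlockPartition β Finset.univ b) :
    ∃ c : V → Bool × Fin (β + 1), ∀ u v, u < v → G.Adj u v → c u = c v →
      ¬ (G.induce (Set.Ioo u v)).Colorable β := by
  have hblock : ∀ j, (G.induce (b ⁻¹' {j})).Colorable (β + 1) := fun j => by
    have := hb.colorable j
    rwa [Finset.coe_univ, Set.univ_inter] at this
  obtain ⟨C, hC⟩ := G.exists_fiberwise_coloring b hblock
  refine ⟨fun v => ((b v).bodd, C v), fun u v huv hadj heq => ?_⟩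
  obtain ⟨hodd, hcol⟩ := Prod.mk.inj heq
  have hbuv : b u < b v := ((hb.monotoneOn (by simp) (by simp) huv.le).lt_of_ne fun h =>
    hC u v hadj h hcol)
  have hgap : b u + 1 < b v := by
    refine lt_of_le_of_ne hbuv fun h => ?_
    rw [← h, Nat.bodd_succ] at hodd
    exact Bool.not_ne_self _ hodd.symm
  have hsub : ↑(Finset.univ : Finset V) ∩ b ⁻¹' {b u + 1} ⊆ Set.Ioo u v := by
    rintro x ⟨-, hx : b x = b u + 1⟩
    refine ⟨lt_of_not_ge fun hxu => ?_, lt_of_not_ge fun hvx => ?_⟩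
    · have := hb.monotoneOn (by simp) (by simp) hxu; omega
    · have := hb.monotoneOn (by simp) (by simp) hvx; omega
  exact fun h => hb.not_colorable v (by simp) _ hgap (h.induce_of_subset G hsub)

end

theorem exists_isBlockPartition (β : ℕ) (s : Finset V) : ∃ b, G.IsBlockPartition β s b := by
  induction s using Finset.induction_on_max with
  | empty =>
    refine ⟨fun _ => 0, ?_, fun _ => ?_, by simp⟩
    · simp [MonotoneOn]
    · rw [Finset.coe_empty, Set.empty_inter]
      exact Colorable.of_isEmpty _
  | insert a s ha ih =>
    obtain ⟨b, hb⟩ := ih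
    by_cases hlast : (G.induce (insert a (↑s ∩ b ⁻¹' {s.sup b}))).Colorable (β + 1)
    · exact ⟨_, hb.insert_of_colorable ha hlast⟩
    · exact ⟨_, hb.insert_of_not_colorable ha hlast⟩

theorem exists_coloring_forall_adj_not_colorable_Ioo [Fintype V] (β : ℕ) :
    ∃ c : V → Bool × Fin (β + 1), ∀ u v, G.Adj u v → c u = c v →
      ¬ (G.induce (Set.Ioo (min u v) (max u v))).Colorable β := by
  obtain ⟨b, hb⟩ := G.exists_isBlockPartition β Finset.univ
  obtain ⟨c, hc⟩ := hb.exists_coloring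
  refine ⟨c, fun u v hadj huv => ?_⟩
  rcases hadj.ne.lt_or_gt with h | h
  · rw [min_eq_left h.le, max_eq_right h.le]
    exact hc u v h hadj huv
  · rw [min_eq_right h.le, max_eq_left h.le]
    exact hc v u h hadj.symm huv.symm

end SimpleGraph

theorem stmt_0_general {V : Type} [Fintype V] [LinearOrder V] (G : SimpleGraph V)
    (α β : ℕ)
    (hχ : ((2 * β + 2) * α : ℕ∞) < G.chromaticNumber) :
    ∃ H : Set V, (α : ℕ∞) < (G.induce H).chromaticNumber ∧
      ∀ u ∈ H, ∀ v ∈ H, G.Adj u v →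
        (β : ℕ∞) < (G.induce (Set.Ioo (min u v) (max u v))).chromaticNumber := by
  obtain ⟨c, hc⟩ := G.exists_coloring_forall_adj_not_colorable_Ioo β
  obtain ⟨k, hk⟩ : ∃ k, ¬ (G.induce (c ⁻¹' {k})).Colorable α := by
    by_contra! h
    have hcol := (G.colorable_mul_of_forall_colorable_induce_fiber c h).chromaticNumber_le
    refine hχ.not_ge (hcol.trans_eq ?_)
    simp only [Fintype.card_prod, Fintype.card_bool, Fintype.card_fin]
    push_cast
    ring
  refine ⟨c ⁻¹' {k}, ?_, fun u hu v hv hadj => ?_⟩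
  · exact not_le.1 (mt SimpleGraph.chromaticNumber_le_iff_colorable.1 hk)
  · exact not_le.1 (mt SimpleGraph.chromaticNumber_le_iff_colorable.1 (hc u v hadj (hu.trans hv.symm)))

/-- McGuinness's lemma: if `χ(G) > (2β+2)·α`, then `G` has an induced subgraph `H`
with `χ(H) > α` such that for every edge `uv` of `H`, the subgraph of `G` induced on the
vertices strictly between `u` and `v` has chromatic number greater than `β`. -/
theorem stmt_0 {V : Type} [Fintype V] [LinearOrder V] (G : SimpleGraph V)
    (α β : ℕ) (hα : 1 ≤ α) (hβ : 1 ≤ β)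
    (hχ : ((2 * β + 2) * α : ℕ∞) < G.chromaticNumber) :
    ∃ H : Set V, (α : ℕ∞) < (G.induce H).chromaticNumber ∧
      ∀ u ∈ H, ∀ v ∈ H, G.Adj u v →
        (β : ℕ∞) < (G.induce (Set.Ioo (min u v) (max u v))).chromaticNumber :=
  stmt_0_general G α β hχ
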